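/- arXiv:2511.03340 — 3 statements merged into one kernel-verified Lean document; each statement's English description precedes it below -/
import Mathlib

section
/- With C^s_i as above, if for every s ∈ {1,…,j} one has (x*_s, σ*_s) ∈ C^s_i and (σ*_s)_i > Φ_i((x*_s)_{-i}), then the best-response sets BR_i((x*_1)_{-i}), …, BR_i((x*_j)_{-i}) are pairwise distinct; in particular j ≤ |{ BR_i(x_{-i}) : x_{-i} feasible }| whenever the collection of distinct best-response sets of player i is finite. -/
/-- If for every `s < j` the point `(x*_s, σ*_s)` satisfies all earlier cuts and
`(σ*_s)_i > Φ_i((x*_s)_{-i})`, then the best-response sets `BR_i((x*_s)_{-i})`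
are pairwise distinct; in particular `j` is at most the number of distinct
best-response sets of player `i` over feasible profiles. -/
theorem stmt_9 {N : Type*} [DecidableEq N] {S : N → Type*}
    (π : (i : N) → (∀ k, S k) → ℝ)
    (X : (i : N) → Set (S i))
    (F : Set (∀ k, S k))
    (hF : F = {x | ∀ k, x k ∈ X k})
    (i : N) (j : ℕ)
    (x : ℕ → ∀ k, S k) (σ : ℕ → N → ℝ) (y : ℕ → S i)
    (BRset : (∀ k, S k) → Set (S i))
    (hBRdef : ∀ xx, BRset xx = {z | z ∈ X i ∧ ∀ w ∈ X i,
        π i (Function.update xx i z) ≤ π i (Function.update xx i w)})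
    (Φ : (∀ k, S k) → ℝ)
    (hΦ : ∀ xx, IsLeast {v | ∃ z ∈ X i, v = π i (Function.update xx i z)} (Φ xx))
    (hfeas : ∀ s < j, x s ∈ F)
    (hy : ∀ s < j, y s ∈ BRset (x s))
    (hC : ∀ s < j, ∀ s' < s, σ s i ≤ π i (Function.update (x s) i (y s')))
    (hgt : ∀ s < j, σ s i > Φ (x s)) :
    (∀ s < j, ∀ t < j, s ≠ t → BRset (x s) ≠ BRset (x t)) ∧
    (∀ K : Finset (Set (S i)), (∀ xx ∈ F, BRset xx ∈ K) → j ≤ K.card) := by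
  -- Key claim: if s < t < j and BRset (x s) = BRset (x t), contradiction.
  have key : ∀ s t, s < t → t < j → BRset (x s) ≠ BRset (x t) := by
    intro s t hst htj heq
    have hsj : s < j := hst.trans htj
    -- y s ∈ BRset (x t)
    have hys : y s ∈ BRset (x t) := heq ▸ hy s hsj
    rw [hBRdef] at hys
    obtain ⟨hysX, hysmin⟩ := hys
    -- Φ (x t) = π i (update (x t) i (y s))
    obtain ⟨⟨z, hz, hzeq⟩, hlb⟩ := hΦ (x t)
    have h1 : π i (Function.update (x t) i (y s)) ≤ Φ (x t) := by
      rw [hzeq]; exact hysmin z hz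
    have h2 : σ t i ≤ π i (Function.update (x t) i (y s)) := hC t htj s hst
    exact absurd (hgt t htj) (not_lt.mpr (h2.trans h1))
  constructor
  · intro s hs t ht hne heq
    rcases hne.lt_or_gt with h | h
    · exact key s t h ht heq
    · exact key t s h hs heq.symm
  · classical
    intro K hK
    have hsub : (Finset.range j).image (fun s => BRset (x s)) ⊆ K := by
      intro v hv
      simp only [Finset.mem_image, Finset.mem_range] at hv
      obtain ⟨s, hs, rfl⟩ := hv
      exact hK (x s) (hfeas s hs)
    have hinj : Set.InjOn (fun s => BRset (x s)) (Finset.range j) := by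
      intro a ha b hb hab
      simp only [Finset.coe_range, Set.mem_Iio] at ha hb
      by_contra hne
      rcases Ne.lt_or_gt hne with h | h
      · exact key a b h hb hab
      · exact key b a h ha hab.symm
    calc j = ((Finset.range j).image (fun s => BRset (x s))).card := by
              rw [Finset.card_image_of_injOn hinj, Finset.card_range]
      _ ≤ K.card := Finset.card_le_card hsub
end

section
/- In the implementation game, a pair (x*, p*) weakly implements the load vector u if and only if (x*, p*) is an exact Nash equilibrium (a (1,0)-NE) of the associated (n+1)-player NEP, i.e.: (i) each x*_i minimizes (p* − μ_i)ᵀ x_i over X_i for all i ∈ N, and (ii) p* minimizes (u − ℓ(x*))ᵀ p over 0 ≤ p ≤ p^max — where (ii) is shown to be equivalent to: ℓ(x*) ≤ u and (ℓ_e(x*) < u_e ⟹ p*_e = 0), provided p^max > 0 componentwise. -/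
/-- Implementation game: `(x*, p*)` weakly implements the load vector `u` iff
`(x*, p*)` is an exact Nash equilibrium of the associated (n+1)-player NEP,
i.e., each `x*_i` minimizes `(p* − μ_i)ᵀ x_i` over `X_i` and `p*` minimizes
`(u − ℓ(x*))ᵀ p` over the box `[0, p^max]`, where `p^max` is sufficiently large
(`p^max_e > |E| · max μ · max c`). -/
theorem stmt_15 {E N : Type*} [Fintype E] [Fintype N]
    (X : N → Set (E → ℝ)) (μ : N → E → ℝ) (u pmax : E → ℝ)
    (cmax μmax : ℝ)
    (h0X : ∀ i, (0 : E → ℝ) ∈ X i)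
    (hXnn : ∀ i, ∀ y ∈ X i, ∀ e, 0 ≤ y e)
    (hXint : ∀ i, ∀ y ∈ X i, ∀ e, y e = 0 ∨ 1 ≤ y e)
    (hXbd : ∀ i, ∀ y ∈ X i, ∀ e, y e ≤ cmax)
    (hμ : ∀ i e, 0 ≤ μ i e ∧ μ i e ≤ μmax)
    (hu : ∀ e, 0 ≤ u e)
    (hpmax : ∀ e, (Fintype.card E : ℝ) * μmax * cmax < pmax e)
    (xstar : N → E → ℝ) (pstar : E → ℝ)
    (hx : ∀ i, xstar i ∈ X i) :
    -- (x*, p*) weakly implements u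
    ((∀ e, ∑ i, xstar i e ≤ u e) ∧
     (∀ i, ∀ y ∈ X i,
        ∑ e, (μ i e - pstar e) * y e ≤ ∑ e, (μ i e - pstar e) * xstar i e) ∧
     (∀ e, ∑ i, xstar i e < u e → pstar e = 0) ∧
     (∀ e, 0 ≤ pstar e ∧ pstar e ≤ pmax e))
    ↔
    -- (x*, p*) is an exact NE of the associated NEP
    ((∀ i, ∀ y ∈ X i,
        ∑ e, (pstar e - μ i e) * xstar i e ≤ ∑ e, (pstar e - μ i e) * y e) ∧
     (∀ e, 0 ≤ pstar e ∧ pstar e ≤ pmax e) ∧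
     (∀ q : E → ℝ, (∀ e, 0 ≤ q e ∧ q e ≤ pmax e) →
        ∑ e, (u e - ∑ i, xstar i e) * pstar e ≤
          ∑ e, (u e - ∑ i, xstar i e) * q e)) := by
  classical
  set c : E → ℝ := fun e => u e - ∑ i, xstar i e with hc
  -- generic fact: minimizing over box implies coordinatewise condition
  have keylem : (∀ e, 0 ≤ pstar e ∧ pstar e ≤ pmax e) →
      (∀ q : E → ℝ, (∀ e, 0 ≤ q e ∧ q e ≤ pmax e) →
        ∑ e, c e * pstar e ≤ ∑ e, c e * q e) →
      ∀ e, ∀ v : ℝ, 0 ≤ v → v ≤ pmax e → c e * pstar e ≤ c e * v := by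
    intro hbox hmin e v hv0 hv1
    set q : E → ℝ := fun e' => if e' = e then v else pstar e' with hq
    have hqbox : ∀ e', 0 ≤ q e' ∧ q e' ≤ pmax e' := by
      intro e'
      by_cases h : e' = e
      · subst h; simp [hq, hv0, hv1]
      · simp [hq, h, hbox e']
    have h1 := hmin q hqbox
    have e1 : ∑ e', c e' * q e' =
        c e * v + ∑ e' ∈ Finset.univ.erase e, c e' * pstar e' := by
      rw [← Finset.add_sum_erase _ _ (Finset.mem_univ e)]
      simp only [hq, if_pos rfl]
      congr 1
      apply Finset.sum_congr rfl
      intro e' he'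
      rw [if_neg (Finset.ne_of_mem_erase he')]
    have e2 : ∑ e', c e' * pstar e' =
        c e * pstar e + ∑ e' ∈ Finset.univ.erase e, c e' * pstar e' := by
      rw [← Finset.add_sum_erase _ _ (Finset.mem_univ e)]
    rw [e1, e2] at h1
    linarith
  constructor
  · rintro ⟨hle, hplayer, hzero, hbox⟩
    refine ⟨?_, hbox, ?_⟩
    · intro i y hy
      have h := hplayer i y hy
      have l1 : ∀ z : E → ℝ, ∑ e, (pstar e - μ i e) * z e
          = - ∑ e, (μ i e - pstar e) * z e := by
        intro z
        rw [← Finset.sum_neg_distrib]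
        exact Finset.sum_congr rfl (fun e _ => by ring)
      rw [l1 y, l1 (xstar i)]; linarith
    · intro q hq
      have h1 : ∑ e, c e * pstar e = 0 := by
        apply Finset.sum_eq_zero
        intro e _
        rcases lt_or_eq_of_le (hle e) with h | h
        · rw [hzero e h, mul_zero]
        · simp [hc, h]
      have h2 : 0 ≤ ∑ e, c e * q e := by
        apply Finset.sum_nonneg
        intro e _
        refine mul_nonneg ?_ (hq e).1
        simp only [hc]; linarith [hle e]
      simp only [hc] at h1 h2
      linarith
  · rintro ⟨hplayer, hbox, hmin⟩
    have key := keylem hbox (fun q hq => hmin q hq)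
    -- load constraint
    have hload : ∀ e, ∑ i, xstar i e ≤ u e := by
      intro e
      by_contra hlt
      push_neg at hlt
      have hce : c e < 0 := by simp only [hc]; linarith
      obtain ⟨i, hi⟩ : ∃ i, 0 < xstar i e := by
        by_contra h
        push_neg at h
        have : ∑ i, xstar i e ≤ 0 :=
          Finset.sum_nonpos (fun i _ => h i)
        linarith [hu e]
      have hxi1 : 1 ≤ xstar i e :=
        (hXint i _ (hx i) e).resolve_left (by linarith)
      have hcmax : 1 ≤ cmax := le_trans hxi1 (hXbd i _ (hx i) e)
      have hμmax : 0 ≤ μmax := le_trans (hμ i e).1 (hμ i e).2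
      have hcard : (0:ℝ) ≤ (Fintype.card E : ℝ) := Nat.cast_nonneg _
      have hpmaxpos : 0 < pmax e :=
        lt_of_le_of_lt (by positivity) (hpmax e)
      have hpe : pstar e = pmax e := by
        have h := key e (pmax e) (le_of_lt hpmaxpos) le_rfl
        nlinarith [(hbox e).2]
      have h0 := hplayer i 0 (h0X i)
      simp only [Pi.zero_apply, mul_zero, Finset.sum_const_zero] at h0
      have hA : pmax e ≤ ∑ e', pstar e' * xstar i e' := by
        have h1 : pmax e ≤ pstar e * xstar i e := by
          rw [hpe]; nlinarith
        exact le_trans h1 (Finset.single_le_sum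
          (fun e' _ => mul_nonneg (hbox e').1 (hXnn i _ (hx i) e'))
          (Finset.mem_univ e))
      have hB : ∑ e', μ i e' * xstar i e' ≤ (Fintype.card E : ℝ) * μmax * cmax := by
        calc ∑ e', μ i e' * xstar i e' ≤ ∑ _e' : E, μmax * cmax := by
              apply Finset.sum_le_sum
              intro e' _
              exact mul_le_mul (hμ i e').2 (hXbd i _ (hx i) e')
                (hXnn i _ (hx i) e') hμmax
          _ = (Fintype.card E : ℝ) * μmax * cmax := by
              rw [Finset.sum_const, Finset.card_univ, nsmul_eq_mul, mul_assoc]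
      have hsplit : ∑ e', (pstar e' - μ i e') * xstar i e'
          = ∑ e', pstar e' * xstar i e' - ∑ e', μ i e' * xstar i e' := by
        rw [← Finset.sum_sub_distrib]
        exact Finset.sum_congr rfl (fun e' _ => by ring)
      rw [hsplit] at h0
      linarith [hpmax e]
    refine ⟨hload, ?_, ?_, hbox⟩
    · intro i y hy
      have h := hplayer i y hy
      have l1 : ∀ z : E → ℝ, ∑ e, (μ i e - pstar e) * z e
          = - ∑ e, (pstar e - μ i e) * z e := by
        intro z
        rw [← Finset.sum_neg_distrib]
        exact Finset.sum_congr rfl (fun e _ => by ring)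
      rw [l1 y, l1 (xstar i)]; linarith
    · intro e hlt
      have hce : 0 < c e := by simp only [hc]; linarith
      have h := key e 0 le_rfl (le_trans (hbox e).1 (hbox e).2)
      rw [mul_zero] at h
      nlinarith [(hbox e).1]
end

section
/- Suppose each player i in a standard NEP has only finitely many distinct best-response sets, i.e., |{ BR_i(x_{-i}) : x_{-i} feasible }| =: K_i < ∞. Consider any sequence of cutting iterations in which, at each step s, a player i(s) with (σ*_s)_{i(s)} > Φ_{i(s)}((x*_s)_{-i(s)}) is selected, a best response y*_s is computed, the cut σ_{i(s)} ≤ π_{i(s)}(y*_{s,i(s)}, x_{-i(s)}) is added, and subsequent iterates satisfy all previously added cuts. Then the total number of cutting iterations is at most Σ_{i∈N} K_i. -/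
/-- If each player `i` has at most `(Ksets i).card` distinct best-response sets,
then any sequence of cutting iterations (each selecting a player whose proxy
exceeds the best-response value, adding the corresponding best-response cut, with
subsequent iterates satisfying all previously added cuts) has length at most
`∑ i, (Ksets i).card`. -/
theorem stmt_17 {N : Type*} [Fintype N] [DecidableEq N] {S : N → Type*}
    (π : (i : N) → (∀ k, S k) → ℝ)
    (X : (i : N) → Set (S i))
    (Φ : (i : N) → (∀ k, S k) → ℝ)
    (hΦ : ∀ i x, IsLeast {v | ∃ z ∈ X i, v = π i (Function.update x i z)} (Φ i x))
    (Ksets : (i : N) → Finset (Set (S i)))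
    (hK : ∀ i (x : ∀ k, S k), (∀ k, x k ∈ X k) →
      {z | z ∈ X i ∧ ∀ w ∈ X i,
        π i (Function.update x i z) ≤ π i (Function.update x i w)} ∈ Ksets i)
    (L : ℕ) (sel : ℕ → N)
    (x : ℕ → ∀ k, S k) (σ : ℕ → N → ℝ) (y : (s : ℕ) → S (sel s))
    (hfeas : ∀ s < L, ∀ k, x s k ∈ X k)
    (hgt : ∀ s < L, Φ (sel s) (x s) < σ s (sel s))
    (hy : ∀ s < L, y s ∈ X (sel s) ∧ ∀ w ∈ X (sel s),
      π (sel s) (Function.update (x s) (sel s) (y s)) ≤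
        π (sel s) (Function.update (x s) (sel s) w))
    (hcuts : ∀ s < L, ∀ s' < s,
      σ s (sel s') ≤ π (sel s') (Function.update (x s) (sel s') (y s'))) :
    L ≤ ∑ i, (Ksets i).card := by
  classical
  -- the best-response set of player i at profile ξ
  set B : (i : N) → (∀ k, S k) → Set (S i) := fun i ξ =>
    {z | z ∈ X i ∧ ∀ w ∈ X i,
      π i (Function.update ξ i z) ≤ π i (Function.update ξ i w)} with hB
  -- key claim: for s < t < L with sel s = sel t, the BR sets differ
  have key : ∀ s t, s < t → t < L → sel s = sel t →
      B (sel s) (x s) ≠ B (sel s) (x t) := by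
    intro s t hst htL hsel hEq
    have hsL : s < L := hst.trans htL
    -- y s belongs to B (sel s) (x s)
    have hys : y s ∈ B (sel s) (x s) := ⟨(hy s hsL).1, (hy s hsL).2⟩
    rw [hEq] at hys
    -- hence y s is a best response at x t, so its value equals Φ (sel s) (x t)
    have hval : π (sel s) (Function.update (x t) (sel s) (y s)) = Φ (sel s) (x t) := by
      obtain ⟨hmem, hlb⟩ := hΦ (sel s) (x t)
      apply le_antisymm
      · obtain ⟨z, hz, hzeq⟩ := hmem
        rw [hzeq]
        exact hys.2 z hz
      · exact hlb ⟨y s, hys.1, rfl⟩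
    have hcut := hcuts t htL s hst
    have hgt' := hgt t htL
    rw [← hsel] at hgt'
    linarith
  -- injective map into the sigma finset
  have hinj : Set.InjOn (fun s => (⟨sel s, B (sel s) (x s)⟩ : (i : N) × Set (S i)))
      ↑(Finset.range L) := by
    intro s hs t ht hEq
    simp only [Finset.coe_range, Set.mem_Iio] at hs ht
    by_contra hne
    obtain ⟨h1, h2⟩ := Sigma.mk.inj_iff.mp hEq
    rcases lt_or_gt_of_ne hne with h | h
    · rw [← h1] at h2
      exact key s t h ht h1 (eq_of_heq h2)
    · rw [h1] at h2
      exact key t s h hs h1.symm (eq_of_heq h2.symm)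
  have hmaps : ∀ s ∈ Finset.range L,
      (⟨sel s, B (sel s) (x s)⟩ : (i : N) × Set (S i)) ∈
        Finset.univ.sigma Ksets := by
    intro s hs
    rw [Finset.mem_range] at hs
    simp only [Finset.mem_sigma, Finset.mem_univ, true_and]
    exact hK (sel s) (x s) (hfeas s hs)
  calc L = (Finset.range L).card := (Finset.card_range L).symm
    _ ≤ (Finset.univ.sigma Ksets).card :=
        Finset.card_le_card_of_injOn _ hmaps hinj
    _ = ∑ i, (Ksets i).card := Finset.card_sigma _ _
end
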